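/- Let A be a commutative unital complex normed algebra with Arens-Hoffman norm on A[x] with parameter t. Then A[x] is tractable if and only if A is tractable. -/

import Mathlib

open Polynomial

/-- The Arens–Hoffman weighted norm on `A[x]`:
`‖Σ_{k=0}^p c_k x^k‖ := Σ_{k=0}^p ‖c_k‖ t^k`. -/
noncomputable def ahNorm {A : Type*} [NormedCommRing A] (t : ℝ) (p : Polynomial A) : ℝ :=
  ∑ k ∈ Finset.range (p.natDegree + 1), ‖p.coeff k‖ * t ^ k

/-- An ideal `I ⊆ A[x]` is closed for (the metric topology of) the Arens–Hoffman norm with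
parameter `t` iff it contains every polynomial that can be approximated arbitrarily well by
members of `I`. -/
def ClosedWrtAhNorm {A : Type*} [NormedCommRing A] (t : ℝ) (I : Ideal (Polynomial A)) :
    Prop :=
  ∀ p : Polynomial A, (∀ ε > (0 : ℝ), ∃ q ∈ I, ahNorm t (p - q) < ε) → p ∈ I

section AHLemmas

variable {A : Type*} [NormedCommRing A] {t : ℝ}

lemma ahNorm_eq_sum {p : Polynomial A} {N : ℕ} (h : p.natDegree < N) :
    ahNorm t p = ∑ k ∈ Finset.range N, ‖p.coeff k‖ * t ^ k := by
  refine Finset.sum_subset (Finset.range_subset_range.2 h) ?_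
  intro k hk hk'
  have : p.natDegree < k := by
    simp only [Finset.mem_range] at hk'
    omega
  rw [Polynomial.coeff_eq_zero_of_natDegree_lt this, norm_zero, zero_mul]

lemma ahNorm_zero : ahNorm t (0 : Polynomial A) = 0 := by
  simp [ahNorm]

lemma ahNorm_neg (p : Polynomial A) : ahNorm t (-p) = ahNorm t p := by
  simp [ahNorm]

lemma ahNorm_C (b : A) : ahNorm t (Polynomial.C b) = ‖b‖ := by
  simp [ahNorm, Polynomial.natDegree_C]

lemma ahNorm_nonneg (ht : 0 ≤ t) (p : Polynomial A) : 0 ≤ ahNorm t p :=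
  Finset.sum_nonneg fun k _ => mul_nonneg (norm_nonneg _) (pow_nonneg ht k)

lemma ahNorm_add_le (ht : 0 ≤ t) (p q : Polynomial A) :
    ahNorm t (p + q) ≤ ahNorm t p + ahNorm t q := by
  set N := max p.natDegree q.natDegree + 1 with hN
  have hp : p.natDegree < N := by omega
  have hq : q.natDegree < N := by omega
  have hpq : (p + q).natDegree < N := by
    have := Polynomial.natDegree_add_le p q
    omega
  rw [ahNorm_eq_sum hp, ahNorm_eq_sum hq, ahNorm_eq_sum hpq, ← Finset.sum_add_distrib]
  refine Finset.sum_le_sum fun k _ => ?_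
  rw [← add_mul]
  refine mul_le_mul_of_nonneg_right ?_ (pow_nonneg ht k)
  rw [Polynomial.coeff_add]
  exact norm_add_le _ _

lemma ahNorm_eq_zero (ht : 0 < t) {p : Polynomial A} (h : ahNorm t p = 0) : p = 0 := by
  have h' := (Finset.sum_eq_zero_iff_of_nonneg
    (fun k _ => mul_nonneg (norm_nonneg _) (pow_nonneg ht.le k))).mp h
  have hlead := h' p.natDegree (Finset.mem_range.mpr (Nat.lt_succ_self _))
  have htk : (0:ℝ) < t ^ p.natDegree := pow_pos ht _
  have hc : ‖p.coeff p.natDegree‖ = 0 := by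
    by_contra hne
    have h2 : 0 < ‖p.coeff p.natDegree‖ * t ^ p.natDegree :=
      mul_pos ((norm_nonneg _).lt_of_ne (Ne.symm hne)) htk
    linarith
  exact Polynomial.leadingCoeff_eq_zero.mp (norm_eq_zero.mp hc)

lemma ahNorm_mul_le (ht : 0 ≤ t) (p q : Polynomial A) :
    ahNorm t (p * q) ≤ ahNorm t p * ahNorm t q := by
  classical
  set f : ℕ → ℝ := fun i => ‖p.coeff i‖ * t ^ i with hf
  set g : ℕ → ℝ := fun j => ‖q.coeff j‖ * t ^ j with hg
  have hf0 : ∀ i, p.natDegree < i → f i = 0 := fun i hi => by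
    simp [hf, Polynomial.coeff_eq_zero_of_natDegree_lt hi]
  have hg0 : ∀ j, q.natDegree < j → g j = 0 := fun j hj => by
    simp [hg, Polynomial.coeff_eq_zero_of_natDegree_lt hj]
  set N := p.natDegree + q.natDegree + 1 with hNdef
  have hmulN : (p * q).natDegree < N := by
    have := Polynomial.natDegree_mul_le (p := p) (q := q)
    omega
  -- step 1 : bound ahNorm (p*q) by the double sum over antidiagonals
  have step1 : ahNorm t (p * q) ≤
      ∑ k ∈ Finset.range N, ∑ x ∈ Finset.HasAntidiagonal.antidiagonal k, f x.1 * g x.2 := by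
    rw [ahNorm_eq_sum hmulN]
    refine Finset.sum_le_sum fun k _ => ?_
    rw [Polynomial.coeff_mul]
    calc ‖∑ x ∈ Finset.HasAntidiagonal.antidiagonal k, p.coeff x.1 * q.coeff x.2‖ * t ^ k
        ≤ (∑ x ∈ Finset.HasAntidiagonal.antidiagonal k, ‖p.coeff x.1 * q.coeff x.2‖) * t ^ k :=
          mul_le_mul_of_nonneg_right (norm_sum_le _ _) (pow_nonneg ht k)
      _ = ∑ x ∈ Finset.HasAntidiagonal.antidiagonal k, ‖p.coeff x.1 * q.coeff x.2‖ * t ^ k :=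
          Finset.sum_mul ..
      _ ≤ ∑ x ∈ Finset.HasAntidiagonal.antidiagonal k, f x.1 * g x.2 := by
          refine Finset.sum_le_sum fun x hx => ?_
          have hxk : x.1 + x.2 = k := Finset.HasAntidiagonal.mem_antidiagonal.mp hx
          have htk : t ^ k = t ^ x.1 * t ^ x.2 := by rw [← pow_add, hxk]
          rw [htk]
          have h1 : ‖p.coeff x.1 * q.coeff x.2‖ ≤ ‖p.coeff x.1‖ * ‖q.coeff x.2‖ :=
            norm_mul_le _ _
          have h2 : f x.1 * g x.2 = ‖p.coeff x.1‖ * ‖q.coeff x.2‖ * (t ^ x.1 * t ^ x.2) := by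
            rw [hf, hg]; ring
          rw [h2]
          exact mul_le_mul_of_nonneg_right h1
            (mul_nonneg (pow_nonneg ht _) (pow_nonneg ht _))
  -- step 2 : the double sum equals the product of the two ahNorms
  have hdisj : (↑(Finset.range N) : Set ℕ).PairwiseDisjoint Finset.HasAntidiagonal.antidiagonal := by
    intro a _ b _ hab
    simp only [Finset.disjoint_left]
    intro x hxa hxb
    exact hab ((Finset.HasAntidiagonal.mem_antidiagonal.mp hxa).symm.trans (Finset.HasAntidiagonal.mem_antidiagonal.mp hxb))
  have hU : ∑ k ∈ Finset.range N, ∑ x ∈ Finset.HasAntidiagonal.antidiagonal k, f x.1 * g x.2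
      = ∑ x ∈ (Finset.range N).biUnion Finset.HasAntidiagonal.antidiagonal, f x.1 * g x.2 :=
    (Finset.sum_biUnion hdisj).symm
  set T := Finset.range N ×ˢ Finset.range N with hT
  have hsub1 : (Finset.range N).biUnion Finset.HasAntidiagonal.antidiagonal ⊆ T := by
    intro x hx
    simp only [Finset.mem_biUnion] at hx
    obtain ⟨k, hk, hxk⟩ := hx
    have hxk' := Finset.HasAntidiagonal.mem_antidiagonal.mp hxk
    simp only [hT, Finset.mem_product, Finset.mem_range] at *
    omega
  have hbig1 : ∑ x ∈ (Finset.range N).biUnion Finset.HasAntidiagonal.antidiagonal, f x.1 * g x.2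
      = ∑ x ∈ T, f x.1 * g x.2 := by
    refine Finset.sum_subset hsub1 fun x hx hx' => ?_
    have : ¬ (x.1 + x.2 < N) := by
      intro hlt
      exact hx' (Finset.mem_biUnion.mpr ⟨x.1 + x.2, Finset.mem_range.mpr hlt,
        Finset.HasAntidiagonal.mem_antidiagonal.mpr rfl⟩)
    have : p.natDegree < x.1 ∨ q.natDegree < x.2 := by omega
    rcases this with h | h
    · rw [hf0 _ h, zero_mul]
    · rw [hg0 _ h, mul_zero]
  have hsub2 : Finset.range (p.natDegree + 1) ×ˢ Finset.range (q.natDegree + 1) ⊆ T := by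
    intro x hx
    simp only [hT, Finset.mem_product, Finset.mem_range] at *
    omega
  have hbig2 : ∑ x ∈ Finset.range (p.natDegree + 1) ×ˢ Finset.range (q.natDegree + 1),
      f x.1 * g x.2 = ∑ x ∈ T, f x.1 * g x.2 := by
    refine Finset.sum_subset hsub2 fun x hx hx' => ?_
    simp only [hT, Finset.mem_product, Finset.mem_range] at hx hx'
    have : p.natDegree < x.1 ∨ q.natDegree < x.2 := by omega
    rcases this with h | h
    · rw [hf0 _ h, zero_mul]
    · rw [hg0 _ h, mul_zero]
  have hprod : ahNorm t p * ahNorm t q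
      = ∑ x ∈ Finset.range (p.natDegree + 1) ×ˢ Finset.range (q.natDegree + 1),
          f x.1 * g x.2 := by
    rw [ahNorm, ahNorm, Finset.sum_mul_sum, ← Finset.sum_product']
  calc ahNorm t (p * q)
      ≤ ∑ k ∈ Finset.range N, ∑ x ∈ Finset.HasAntidiagonal.antidiagonal k, f x.1 * g x.2 := step1
    _ = ∑ x ∈ T, f x.1 * g x.2 := by rw [hU, hbig1]
    _ = ahNorm t p * ahNorm t q := by rw [hprod, hbig2]

lemma norm_eval_le [NormOneClass A] (ht : 0 ≤ t) {a : A} (ha : ‖a‖ ≤ t) (p : Polynomial A) :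
    ‖p.eval a‖ ≤ ahNorm t p := by
  rw [Polynomial.eval_eq_sum_range]
  refine (norm_sum_le _ _).trans (Finset.sum_le_sum fun k _ => ?_)
  calc ‖p.coeff k * a ^ k‖ ≤ ‖p.coeff k‖ * ‖a ^ k‖ := norm_mul_le _ _
    _ ≤ ‖p.coeff k‖ * t ^ k := by
        refine mul_le_mul_of_nonneg_left ?_ (norm_nonneg _)
        rcases Nat.eq_zero_or_pos k with hk | hk
        · subst hk; simpa using le_refl (1:ℝ)
        · exact (norm_pow_le' a hk).trans (pow_le_pow_left₀ (norm_nonneg a) ha k)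

/-- The Arens–Hoffman norm as an `AddGroupNorm`. -/
noncomputable def ahAddGroupNorm (ht : 0 < t) : AddGroupNorm (Polynomial A) where
  toFun := ahNorm t
  map_zero' := ahNorm_zero
  add_le' := ahNorm_add_le ht.le
  neg' := ahNorm_neg
  eq_zero_of_map_eq_zero' := fun _ h => ahNorm_eq_zero ht h

end AHLemmas
section Mpr

variable {A : Type*} [NormedCommRing A] [NormedAlgebra ℂ A] [NormOneClass A] {t : ℝ}

lemma poly_mem_imp_zero (ht : 0 < t)
    (hA : ({a : A | ∀ I : Ideal A, I.IsMaximal → IsClosed (I : Set A) → a ∈ I} = {0}))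
    {p : Polynomial A}
    (hp : ∀ I : Ideal (Polynomial A), I.IsMaximal → ClosedWrtAhNorm t I → p ∈ I) :
    p = 0 := by
  classical
  -- Step 1: `p` evaluates to `0` at all real scalars in `[0, t]`.
  have heval : ∀ s : ℝ, 0 ≤ s → s ≤ t →
      Polynomial.eval (algebraMap ℂ A (s : ℂ)) p = 0 := by
    intro s hs0 hst
    set a : A := algebraMap ℂ A (s : ℂ) with ha
    have hna : ‖a‖ ≤ t := by
      rw [ha, norm_algebraMap', Complex.norm_real, Real.norm_eq_abs, abs_of_nonneg hs0]
      exact hst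
    have hmem : Polynomial.eval a p ∈
        {b : A | ∀ I : Ideal A, I.IsMaximal → IsClosed (I : Set A) → b ∈ I} := by
      intro M hM hMc
      haveI := hM
      set φ := Polynomial.evalRingHom a with hφ
      have hφs : Function.Surjective φ := fun b => ⟨Polynomial.C b, Polynomial.eval_C⟩
      have hJm : (M.comap φ).IsMaximal := Ideal.comap_isMaximal_of_surjective φ hφs
      have hJcl : ClosedWrtAhNorm t (M.comap φ) := by
        intro r hr
        rw [Ideal.mem_comap]
        have hcl : Polynomial.eval a r ∈ closure (M : Set A) := by
          rw [Metric.mem_closure_iff]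
          intro ε hε
          obtain ⟨q, hq, hlt⟩ := hr ε hε
          rw [Ideal.mem_comap] at hq
          refine ⟨Polynomial.eval a q, hq, ?_⟩
          rw [dist_eq_norm]
          calc ‖Polynomial.eval a r - Polynomial.eval a q‖
              = ‖Polynomial.eval a (r - q)‖ := by rw [Polynomial.eval_sub]
            _ ≤ ahNorm t (r - q) := norm_eval_le ht.le hna _
            _ < ε := hlt
        rwa [hMc.closure_eq] at hcl
      have := hp (M.comap φ) hJm hJcl
      rwa [Ideal.mem_comap] at this
    rw [hA] at hmem
    exact hmem
  -- Step 2: all coefficients vanish, via dual functionals.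
  refine Polynomial.ext fun k => ?_
  rcases lt_or_ge p.natDegree k with hk | hk
  · simp [Polynomial.coeff_eq_zero_of_natDegree_lt hk]
  · have hk' : k ∈ Finset.range (p.natDegree + 1) := Finset.mem_range.mpr (by omega)
    rw [Polynomial.coeff_zero]
    refine NormedSpace.eq_zero_of_forall_dual_eq_zero ℂ fun f => ?_
    set Q : Polynomial ℂ :=
      ∑ j ∈ Finset.range (p.natDegree + 1),
        Polynomial.C (f (p.coeff j)) * Polynomial.X ^ j with hQ
    have hQeval : ∀ s : ℝ, 0 ≤ s → s ≤ t → Q.eval (s : ℂ) = 0 := by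
      intro s hs0 hst
      have h0 := heval s hs0 hst
      have : Q.eval (s : ℂ) = f (Polynomial.eval (algebraMap ℂ A (s : ℂ)) p) := by
        rw [hQ, Polynomial.eval_finset_sum, Polynomial.eval_eq_sum_range, map_sum]
        refine Finset.sum_congr rfl fun j _ => ?_
        have hpow : (algebraMap ℂ A (s : ℂ)) ^ j = algebraMap ℂ A ((s : ℂ) ^ j) := by
          rw [map_pow]
        have hsmul : p.coeff j * (algebraMap ℂ A (s : ℂ)) ^ j
            = ((s : ℂ) ^ j) • p.coeff j := by
          rw [hpow, Algebra.smul_def, mul_comm]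
        rw [hsmul, map_smul, smul_eq_mul, Polynomial.eval_mul, Polynomial.eval_C,
          Polynomial.eval_pow, Polynomial.eval_X, mul_comm]
      rw [this, h0, map_zero]
    have hinf : {z : ℂ | Q.IsRoot z}.Infinite := by
      have h1 : ((fun s : ℝ => (s : ℂ)) '' Set.Icc 0 t).Infinite := by
        refine Set.Infinite.image (fun x _ y _ h => ?_) (Set.infinite_coe_iff.mp (Set.Icc.infinite ht))
        exact_mod_cast h
      refine h1.mono ?_
      rintro z ⟨s, ⟨hs0, hst⟩, rfl⟩
      exact hQeval s hs0 hst
    have hQ0 : Q = 0 := Polynomial.eq_zero_of_infinite_isRoot Q hinf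
    have hQc : Q.coeff k = f (p.coeff k) := by
      rw [hQ, Polynomial.finset_sum_coeff]
      have : ∀ j ∈ Finset.range (p.natDegree + 1),
          (Polynomial.C (f (p.coeff j)) * Polynomial.X ^ j).coeff k
            = if k = j then f (p.coeff j) else 0 := by
        intro j _
        rw [Polynomial.coeff_C_mul, Polynomial.coeff_X_pow]
        by_cases h : j = k <;> simp [h, eq_comm]
      rw [Finset.sum_congr rfl this, Finset.sum_ite_eq, if_pos hk']
    rw [hQ0] at hQc
    simpa using hQc.symm

end Mpr
section Mp

variable {A : Type*} [NormedCommRing A] [NormedAlgebra ℂ A] [NormOneClass A] {t : ℝ}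

lemma C_mem_of_closed_maximal (ht : 0 < t)
    {a : A} (ha : ∀ I : Ideal A, I.IsMaximal → IsClosed (I : Set A) → a ∈ I)
    {J : Ideal (Polynomial A)} (hJmax : J.IsMaximal) (hJcl : ClosedWrtAhNorm t J) :
    Polynomial.C a ∈ J := by
  classical
  letI nacg : NormedAddCommGroup (Polynomial A) := (ahAddGroupNorm ht).toNormedAddCommGroup
  have hnorm : ∀ p : Polynomial A, ‖p‖ = ahNorm t p := fun _ => rfl
  letI : NormedCommRing (Polynomial A) :=
    { nacg, (inferInstance : CommRing (Polynomial A)) with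
      dist_eq := fun x y => by rw [dist_eq_norm, ← norm_neg, neg_sub, neg_add_eq_sub]
      norm_mul_le := fun p q => by
        rw [hnorm, hnorm, hnorm]; exact ahNorm_mul_le ht.le p q }
  letI : NormedAlgebra ℂ (Polynomial A) :=
    { (inferInstance : Algebra ℂ (Polynomial A)) with
      norm_smul_le := fun r p => by
        rw [Algebra.smul_def]
        refine (norm_mul_le _ _).trans ?_
        have h1 : ‖algebraMap ℂ (Polynomial A) r‖ = ‖r‖ := by
          rw [Polynomial.algebraMap_apply, hnorm, ahNorm_C, norm_algebraMap']
        rw [h1] }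
  haveI hJc : IsClosed (J : Set (Polynomial A)) := by
    refine isClosed_of_closure_subset fun p hp => ?_
    refine hJcl p fun ε hε => ?_
    obtain ⟨q, hq, hd⟩ := Metric.mem_closure_iff.mp hp ε hε
    exact ⟨q, hq, by rwa [dist_eq_norm, hnorm] at hd⟩
  haveI := hJmax
  letI : Field (Polynomial A ⧸ J) := Ideal.Quotient.field J
  haveI : Nontrivial (UniformSpace.Completion (Polynomial A ⧸ J)) :=
    (UniformSpace.Completion.coe_injective (Polynomial A ⧸ J)).nontrivial
  have hcoe_alg : ∀ l : ℂ,
      ((algebraMap ℂ (Polynomial A ⧸ J) l : (Polynomial A ⧸ J)) : UniformSpace.Completion (Polynomial A ⧸ J))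
        = algebraMap ℂ (UniformSpace.Completion (Polynomial A ⧸ J)) l := by
    intro l
    rw [Algebra.algebraMap_eq_smul_one, Algebra.algebraMap_eq_smul_one,
      UniformSpace.Completion.coe_smul, UniformSpace.Completion.coe_one]
  -- Gelfand–Mazur via the completion: every element of `(Polynomial A ⧸ J)` is a scalar.
  have key : ∀ y : (Polynomial A ⧸ J), ∃ l : ℂ, algebraMap ℂ (Polynomial A ⧸ J) l = y := by
    intro y
    obtain ⟨l, hl⟩ := spectrum.nonempty ((y : (Polynomial A ⧸ J)) : UniformSpace.Completion (Polynomial A ⧸ J))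
    refine ⟨l, ?_⟩
    by_contra hne
    have hu : IsUnit (algebraMap ℂ (Polynomial A ⧸ J) l - y) :=
      isUnit_iff_ne_zero.mpr (sub_ne_zero.mpr hne)
    have hu2 := hu.map (UniformSpace.Completion.coeRingHom :
      (Polynomial A ⧸ J) →+* UniformSpace.Completion (Polynomial A ⧸ J))
    rw [RingHom.map_sub] at hu2
    apply spectrum.mem_iff.mp hl
    have h3 : (UniformSpace.Completion.coeRingHom ((algebraMap ℂ (Polynomial A ⧸ J)) l) :
          UniformSpace.Completion (Polynomial A ⧸ J))
        = algebraMap ℂ (UniformSpace.Completion (Polynomial A ⧸ J)) l := by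
      rw [← hcoe_alg l]; rfl
    have h4 : (UniformSpace.Completion.coeRingHom (y : Polynomial A ⧸ J) :
          UniformSpace.Completion (Polynomial A ⧸ J)) = ((y : Polynomial A ⧸ J) :
          UniformSpace.Completion (Polynomial A ⧸ J)) := rfl
    rwa [h3, h4] at hu2
  have hinj : Function.Injective (algebraMap ℂ (Polynomial A ⧸ J)) := (algebraMap ℂ (Polynomial A ⧸ J)).injective
  set e : ℂ ≃+* (Polynomial A ⧸ J) := RingEquiv.ofBijective (algebraMap ℂ (Polynomial A ⧸ J)) ⟨hinj, fun y => key y⟩ with he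
  set χ : A →+* ℂ := e.symm.toRingHom.comp ((Ideal.Quotient.mk J).comp Polynomial.C) with hχ
  have hker : ∀ b : A, χ b = 0 ↔ Polynomial.C b ∈ J := by
    intro b
    rw [hχ]
    simp only [RingHom.comp_apply, RingEquiv.toRingHom_eq_coe, RingHom.coe_coe]
    rw [EmbeddingLike.map_eq_zero_iff, Ideal.Quotient.eq_zero_iff_mem]
  have hχs : Function.Surjective χ := by
    intro l
    refine ⟨algebraMap ℂ A l, ?_⟩
    have h1 : (Ideal.Quotient.mk J) (Polynomial.C (algebraMap ℂ A l))
        = algebraMap ℂ (Polynomial A ⧸ J) l := by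
      rw [← Polynomial.algebraMap_apply]
      rfl
    rw [hχ]
    simp only [RingHom.comp_apply, RingEquiv.toRingHom_eq_coe, RingHom.coe_coe]
    rw [h1]
    have h2 : algebraMap ℂ (Polynomial A ⧸ J) l = e l := rfl
    rw [h2, RingEquiv.symm_apply_apply]
  set M := RingHom.ker χ with hM
  have hMmax : M.IsMaximal := RingHom.ker_isMaximal_of_surjective χ hχs
  have hMcl : IsClosed (M : Set A) := by
    refine isClosed_of_closure_subset fun b hb => ?_
    have hbJ : Polynomial.C b ∈ J := by
      refine hJcl _ fun ε hε => ?_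
      obtain ⟨m, hm, hd⟩ := Metric.mem_closure_iff.mp hb ε hε
      have hmJ : Polynomial.C m ∈ J := (hker m).mp (RingHom.mem_ker.mp hm)
      refine ⟨Polynomial.C m, hmJ, ?_⟩
      rw [← map_sub, ahNorm_C, ← dist_eq_norm]
      exact hd
    exact RingHom.mem_ker.mpr ((hker b).mpr hbJ)
  exact (hker a).mp (RingHom.mem_ker.mp (ha M hMmax hMcl))

end Mp
/-- Let `A` be a commutative unital complex normed algebra with Arens–Hoffman norm on
`A[x]` with parameter `t > 0`.  Then `A[x]` is tractable (the intersection of its closed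
maximal ideals is `{0}`) if and only if `A` is tractable. -/
theorem polynomial_tractable_iff (A : Type*) [NormedCommRing A] [NormedAlgebra ℂ A]
    [NormOneClass A] (t : ℝ) (ht : 0 < t) :
    ({p : Polynomial A | ∀ I : Ideal (Polynomial A),
        I.IsMaximal → ClosedWrtAhNorm t I → p ∈ I} = {0}) ↔
    ({a : A | ∀ I : Ideal A, I.IsMaximal → IsClosed (I : Set A) → a ∈ I} = {0}) := by
  constructor
  · intro hAx
    rw [Set.eq_singleton_iff_unique_mem]
    refine ⟨fun I _ _ => I.zero_mem, fun a ha => ?_⟩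
    have hCa : Polynomial.C a ∈ {p : Polynomial A | ∀ I : Ideal (Polynomial A),
        I.IsMaximal → ClosedWrtAhNorm t I → p ∈ I} :=
      fun J hJm hJc => C_mem_of_closed_maximal ht ha hJm hJc
    rw [hAx] at hCa
    exact Polynomial.C_eq_zero.mp (Set.mem_singleton_iff.mp hCa)
  · intro hA
    rw [Set.eq_singleton_iff_unique_mem]
    exact ⟨fun I _ _ => I.zero_mem, fun p hp => poly_mem_imp_zero ht hA hp⟩
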